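/- arXiv:1109.6392 — 5 statements merged into one kernel-verified Lean document; each statement's English description precedes it below -/
import Mathlib

section
/- For any row stochastic matrix A, δ(A) ≤ λ(A). -/
open Finset Matrix

def RowStochastic {n : Type*} [Fintype n] (A : Matrix n n ℝ) : Prop :=
  (∀ i j, 0 ≤ A i j) ∧ ∀ i, ∑ j, A i j = 1

noncomputable def deltaErg {n : Type*} [Fintype n] [Nonempty n] (A : Matrix n n ℝ) : ℝ :=
  univ.sup' univ_nonempty fun j : n =>
    univ.sup' univ_nonempty fun p : n × n => |A p.1 j - A p.2 j|

noncomputable def lamErg {n : Type*} [Fintype n] [Nonempty n] (A : Matrix n n ℝ) : ℝ :=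
  1 - univ.inf' univ_nonempty fun p : n × n => ∑ j, min (A p.1 j) (A p.2 j)

lemma key_aux {n : Type*} [Fintype n] (A : Matrix n n ℝ) (hA : RowStochastic A)
    (i1 i2 j : n) : A i1 j - A i2 j ≤ 1 - ∑ k, min (A i1 k) (A i2 k) := by
  have h1 : A i1 j - A i2 j ≤ A i1 j - min (A i1 j) (A i2 j) := by
    have := min_le_right (A i1 j) (A i2 j); linarith
  have h2 : A i1 j - min (A i1 j) (A i2 j) ≤ ∑ k, (A i1 k - min (A i1 k) (A i2 k)) := by
    apply Finset.single_le_sum (f := fun k => A i1 k - min (A i1 k) (A i2 k))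
    · intro k _
      have := min_le_left (A i1 k) (A i2 k); linarith
    · exact mem_univ j
  have h3 : ∑ k, (A i1 k - min (A i1 k) (A i2 k)) = 1 - ∑ k, min (A i1 k) (A i2 k) := by
    rw [Finset.sum_sub_distrib, hA.2 i1]
  linarith

theorem stmt3 {n : Type*} [Fintype n] [Nonempty n] (A : Matrix n n ℝ)
    (hA : RowStochastic A) : deltaErg A ≤ lamErg A := by
  unfold deltaErg lamErg
  apply Finset.sup'_le
  intro j _
  apply Finset.sup'_le
  intro p _
  have hinf : univ.inf' univ_nonempty (fun p : n × n => ∑ k, min (A p.1 k) (A p.2 k))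
      ≤ ∑ k, min (A p.1 k) (A p.2 k) := Finset.inf'_le _ (mem_univ p)
  have h1 := key_aux A hA p.1 p.2 j
  have h2 := key_aux A hA p.2 p.1 j
  rw [abs_sub_le_iff]
  constructor
  · linarith
  · have : ∑ k, min (A p.2 k) (A p.1 k) = ∑ k, min (A p.1 k) (A p.2 k) := by
      simp [min_comm]
    linarith
end

section
/- For any two square row stochastic matrices A and B of the same size, δ(AB) ≤ λ(A)·δ(B). -/
open Finset Matrix

lemma key {n : Type*} [Fintype n] [Nonempty n]
    (A B : Matrix n n ℝ) (hA : RowStochastic A) (hB : RowStochastic B)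
    (i1 i2 j : n) :
    (A * B) i1 j - (A * B) i2 j ≤ lamErg A * deltaErg B := by
  obtain ⟨hA0, hA1⟩ := hA
  set M : ℝ := univ.sup' univ_nonempty (fun k => B k j) with hM
  set μ : ℝ := univ.inf' univ_nonempty (fun k => B k j) with hμ
  set m : n → ℝ := fun k => min (A i1 k) (A i2 k) with hm
  set s : ℝ := 1 - ∑ k, m k with hs
  have hw1 : ∀ k, 0 ≤ A i1 k - m k := fun k => by
    simp [hm, sub_nonneg, min_le_left]
  have hw2 : ∀ k, 0 ≤ A i2 k - m k := fun k => by
    simp [hm, sub_nonneg, min_le_right]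
  have hsum1 : ∑ k, (A i1 k - m k) = s := by
    rw [Finset.sum_sub_distrib, hA1 i1, hs]
  have hsum2 : ∑ k, (A i2 k - m k) = s := by
    rw [Finset.sum_sub_distrib, hA1 i2, hs]
  have hBM : ∀ k, B k j ≤ M := fun k => by
    rw [hM]; exact Finset.le_sup' (fun k => B k j) (Finset.mem_univ k)
  have hBμ : ∀ k, μ ≤ B k j := fun k => by
    rw [hμ]; exact Finset.inf'_le (fun k => B k j) (Finset.mem_univ k)
  have hMμ : μ ≤ M := by
    obtain ⟨k⟩ := (inferInstance : Nonempty n)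
    exact le_trans (hBμ k) (hBM k)
  have hslam : s ≤ lamErg A := by
    simp only [lamErg, hs]
    have h2 : (univ.inf' univ_nonempty fun p : n × n =>
        ∑ j, min (A p.1 j) (A p.2 j)) ≤ ∑ k, m k :=
      Finset.inf'_le _ (Finset.mem_univ (i1, i2))
    linarith
  have hlam0 : 0 ≤ lamErg A := by
    obtain ⟨i⟩ := (inferInstance : Nonempty n)
    have h2 : (univ.inf' univ_nonempty fun p : n × n =>
        ∑ j, min (A p.1 j) (A p.2 j)) ≤ ∑ k, min (A i k) (A i k) :=
      Finset.inf'_le _ (Finset.mem_univ (i, i))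
    simp only [min_self, hA1 i] at h2
    simp only [lamErg]; linarith
  have hdelta : M - μ ≤ deltaErg B := by
    obtain ⟨k0, _, hk0⟩ := Finset.exists_mem_eq_sup' (univ_nonempty) (fun k => B k j)
    obtain ⟨l0, _, hl0⟩ := Finset.exists_mem_eq_inf' (univ_nonempty) (fun k => B k j)
    have h1 : M - μ ≤ |B k0 j - B l0 j| := by
      rw [hM, hμ, hk0, hl0]; exact le_abs_self _
    refine h1.trans ?_
    refine le_trans (Finset.le_sup' (f := fun p : n × n => |B p.1 j - B p.2 j|)
      (Finset.mem_univ (k0, l0))) ?_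
    exact Finset.le_sup' (f := fun j : n => univ.sup' univ_nonempty
      fun p : n × n => |B p.1 j - B p.2 j|) (Finset.mem_univ j)
  have hD : (A * B) i1 j - (A * B) i2 j ≤ s * (M - μ) := by
    rw [Matrix.mul_apply, Matrix.mul_apply]
    have e1 : ∑ k, A i1 k * B k j - ∑ k, A i2 k * B k j
        = ∑ k, (A i1 k - m k) * B k j - ∑ k, (A i2 k - m k) * B k j := by
      simp only [sub_mul, Finset.sum_sub_distrib]; ring
    rw [e1]
    have h1 : ∑ k, (A i1 k - m k) * B k j ≤ s * M := by
      rw [← hsum1, Finset.sum_mul]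
      refine Finset.sum_le_sum fun k _ => ?_
      exact mul_le_mul_of_nonneg_left (hBM k) (hw1 k)
    have h2 : s * μ ≤ ∑ k, (A i2 k - m k) * B k j := by
      rw [← hsum2, Finset.sum_mul]
      refine Finset.sum_le_sum fun k _ => ?_
      exact mul_le_mul_of_nonneg_left (hBμ k) (hw2 k)
    have : s * (M - μ) = s * M - s * μ := by ring
    linarith
  calc (A * B) i1 j - (A * B) i2 j ≤ s * (M - μ) := hD
    _ ≤ lamErg A * (M - μ) := mul_le_mul_of_nonneg_right hslam (by linarith)
    _ ≤ lamErg A * deltaErg B := mul_le_mul_of_nonneg_left hdelta hlam0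

theorem stmt5 {n : Type*} [Fintype n] [DecidableEq n] [Nonempty n]
    (A B : Matrix n n ℝ) (hA : RowStochastic A) (hB : RowStochastic B) :
    deltaErg (A * B) ≤ lamErg A * deltaErg B := by
  refine Finset.sup'_le _ _ fun j _ => Finset.sup'_le _ _ fun p _ => ?_
  rw [abs_sub_le_iff]
  exact ⟨key A B hA hB p.1 p.2 j, key A B hA hB p.2 p.1 j⟩
end

section
/- If A_1, ..., A_p are row stochastic matrices and at least one A_i is scrambling (λ(A_i) < 1) while λ(A_j) ≤ 1 for all j, then δ(A_1 ··· A_p) ≤ λ(A_i) < 1. More generally, if at least s of the matrices satisfy λ(A_j) ≤ d < 1, then δ(A_1 ··· A_p) ≤ d^s. -/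
/-!
If `u` and `v` have total mass `1` and `c k = min (u k) (v k)`, then `u - c` and `v - c` are
nonnegative of mass `1 - ∑ c`, so for any `x` with values in `[lo, hi]` the difference
`u ⬝ᵥ x - v ⬝ᵥ x` is at most `(1 - ∑ c) (hi - lo)`. Applied to two rows of `A` and a column of `B`
this gives the contraction `δ(AB) ≤ λ(A) δ(B)`, hence `δ(A₁ ⋯ Aₚ) ≤ ∏ λ(Aᵢ)`. Since every
`λ(Aᵢ)` lies in `[0, 1]`, the product is at most `d ^ s` as soon as `s` of the factors are `≤ d`.
-/

open Finset Matrix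

section ErgodicityCoefficients

variable {n : Type*} [Fintype n] [Nonempty n]

lemma abs_sub_le_deltaErg (B : Matrix n n ℝ) (k₁ k₂ j : n) :
    |B k₁ j - B k₂ j| ≤ deltaErg B :=
  (le_sup' (fun p : n × n => |B p.1 j - B p.2 j|) (mem_univ (k₁, k₂))).trans
    (le_sup' (fun j => univ.sup' univ_nonempty fun p : n × n => |B p.1 j - B p.2 j|)
      (mem_univ j))

lemma deltaErg_one_le_one [DecidableEq n] : deltaErg (1 : Matrix n n ℝ) ≤ 1 := by
  refine sup'_le _ _ fun j _ => sup'_le _ _ fun p _ => ?_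
  rw [one_apply, one_apply]
  split_ifs <;> norm_num

lemma one_sub_lamErg_le_sum_min (A : Matrix n n ℝ) (i₁ i₂ : n) :
    1 - lamErg A ≤ ∑ j, min (A i₁ j) (A i₂ j) := by
  have := inf'_le (fun p : n × n => ∑ j, min (A p.1 j) (A p.2 j)) (mem_univ (i₁, i₂))
  rw [lamErg]
  linarith

lemma lamErg_nonneg (A : Matrix n n ℝ) (hA : ∀ i, ∑ j, A i j = 1) : 0 ≤ lamErg A := by
  let i := Classical.arbitrary n
  have := one_sub_lamErg_le_sum_min A i i
  simp only [min_self, hA i] at this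
  linarith

lemma lamErg_le_one (A : Matrix n n ℝ) (hA : RowStochastic A) : lamErg A ≤ 1 := by
  have : 0 ≤ univ.inf' univ_nonempty fun p : n × n => ∑ j, min (A p.1 j) (A p.2 j) :=
    le_inf' _ _ fun p _ => sum_nonneg fun j _ => le_min (hA.1 _ _) (hA.1 _ _)
  rw [lamErg]
  linarith

end ErgodicityCoefficients

lemma dotProduct_sub_dotProduct_le {n : Type*} [Fintype n] (u v x : n → ℝ)
    (hu : ∑ k, u k = 1) (hv : ∑ k, v k = 1) {lo hi : ℝ} (hx : ∀ k, x k ∈ Set.Icc lo hi) :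
    u ⬝ᵥ x - v ⬝ᵥ x ≤ (1 - ∑ k, min (u k) (v k)) * (hi - lo) := by
  set c : n → ℝ := fun k => min (u k) (v k)
  have hu_le : u ⬝ᵥ x ≤ c ⬝ᵥ x + (1 - ∑ k, c k) * hi :=
    calc u ⬝ᵥ x ≤ ∑ k, (c k * x k + (u k - c k) * hi) :=
          sum_le_sum fun k _ => by
            nlinarith [(hx k).2, sub_nonneg.2 (min_le_left (u k) (v k))]
      _ = c ⬝ᵥ x + (1 - ∑ k, c k) * hi := by
          rw [sum_add_distrib, ← sum_mul, sum_sub_distrib, hu]; rfl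
  have hv_ge : c ⬝ᵥ x + (1 - ∑ k, c k) * lo ≤ v ⬝ᵥ x :=
    calc c ⬝ᵥ x + (1 - ∑ k, c k) * lo = ∑ k, (c k * x k + (v k - c k) * lo) := by
          rw [sum_add_distrib, ← sum_mul, sum_sub_distrib, hv]; rfl
      _ ≤ v ⬝ᵥ x :=
          sum_le_sum fun k _ => by
            nlinarith [(hx k).1, sub_nonneg.2 (min_le_right (u k) (v k))]
  nlinarith

lemma deltaErg_mul_le {n : Type*} [Fintype n] [Nonempty n] (A B : Matrix n n ℝ)
    (hA : ∀ i, ∑ j, A i j = 1) : deltaErg (A * B) ≤ lamErg A * deltaErg B := by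
  refine sup'_le _ _ fun j _ => sup'_le _ _ fun ⟨i₁, i₂⟩ _ => ?_
  obtain ⟨kmax, hkmax⟩ := Finite.exists_max fun k => B k j
  obtain ⟨kmin, hkmin⟩ := Finite.exists_min fun k => B k j
  have hcol : ∀ k, B k j ∈ Set.Icc (B kmin j) (B kmax j) := fun k => ⟨hkmin k, hkmax k⟩
  have hspread : B kmax j - B kmin j ≤ deltaErg B :=
    (le_abs_self _).trans (abs_sub_le_deltaErg B kmax kmin j)
  have hrows : |(A * B) i₁ j - (A * B) i₂ j|
      ≤ (1 - ∑ k, min (A i₁ k) (A i₂ k)) * (B kmax j - B kmin j) := by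
    simp only [mul_apply, abs_sub_le_iff]
    constructor
    · exact dotProduct_sub_dotProduct_le (A i₁) (A i₂) (fun k => B k j) (hA i₁) (hA i₂) hcol
    · have h := dotProduct_sub_dotProduct_le (A i₂) (A i₁) (fun k => B k j) (hA i₂) (hA i₁) hcol
      simp only [min_comm (A i₂ _)] at h
      exact h
  exact hrows.trans <| mul_le_mul (by linarith [one_sub_lamErg_le_sum_min A i₁ i₂]) hspread
    (sub_nonneg.2 (hkmin kmax)) (lamErg_nonneg A hA)

lemma deltaErg_list_prod_le {n : Type*} [Fintype n] [DecidableEq n] [Nonempty n]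
    (L : List (Matrix n n ℝ)) (hL : ∀ M ∈ L, ∀ i, ∑ j, M i j = 1) :
    deltaErg L.prod ≤ (L.map lamErg).prod := by
  induction L with
  | nil => simpa using deltaErg_one_le_one
  | cons M L ih =>
    have hM := hL M List.mem_cons_self
    simp only [List.prod_cons, List.map_cons]
    calc deltaErg (M * L.prod) ≤ lamErg M * deltaErg L.prod := deltaErg_mul_le M L.prod hM
      _ ≤ lamErg M * (L.map lamErg).prod :=
          mul_le_mul_of_nonneg_left (ih fun N hN => hL N (List.mem_cons_of_mem _ hN))
            (lamErg_nonneg M hM)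

theorem stmt8 {n : Type*} [Fintype n] [DecidableEq n] [Nonempty n] (p : ℕ)
    (A : Fin p → Matrix n n ℝ) (hA : ∀ i, RowStochastic (A i)) :
    (∀ i : Fin p, lamErg (A i) < 1 →
        deltaErg (List.ofFn A).prod ≤ lamErg (A i) ∧ lamErg (A i) < 1) ∧
      ∀ (d : ℝ) (s : ℕ) (S : Finset (Fin p)), 0 ≤ d → d < 1 →
        (∀ j ∈ S, lamErg (A j) ≤ d) → s ≤ S.card →
        deltaErg (List.ofFn A).prod ≤ d ^ s := by
  have hnonneg i : 0 ≤ lamErg (A i) := lamErg_nonneg _ (hA i).2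
  have hsub (S : Finset (Fin p)) : deltaErg (List.ofFn A).prod ≤ ∏ i ∈ S, lamErg (A i) := by
    have hprod := deltaErg_list_prod_le (List.ofFn A) fun M hM => by
      obtain ⟨i, rfl⟩ := List.mem_ofFn.mp hM
      exact (hA i).2
    rw [List.map_ofFn, List.prod_ofFn] at hprod
    exact hprod.trans <| prod_le_prod_of_subset_of_le_one (subset_univ S)
      (fun i _ => hnonneg i) fun i _ _ => lamErg_le_one _ (hA i)
  refine ⟨fun i hi => ⟨by simpa using hsub {i}, hi⟩, fun d s S hd₀ hd₁ hS hs => ?_⟩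
  calc deltaErg (List.ofFn A).prod ≤ ∏ i ∈ S, lamErg (A i) := hsub S
    _ ≤ ∏ _i ∈ S, d := prod_le_prod (fun i _ => hnonneg i) hS
    _ = d ^ S.card := prod_const d
    _ ≤ d ^ s := pow_le_pow_of_le_one hd₀ hd₁.le hs
end

section
/- If y and z are stochastic row vectors and T is a row stochastic matrix with δ(T) ≤ ψ, then for every coordinate i, |(yT)[i] - (zT)[i]| ≤ ψ. -/
open Finset Matrix

lemma convex_bounds {n : Type*} [Fintype n] [Nonempty n] (w c : n → ℝ)
    (hw : (∀ i, 0 ≤ w i) ∧ ∑ i, w i = 1) :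
    (univ.inf' univ_nonempty c ≤ ∑ k, w k * c k) ∧
    (∑ k, w k * c k ≤ univ.sup' univ_nonempty c) := by
  constructor
  · calc univ.inf' univ_nonempty c = ∑ k, w k * univ.inf' univ_nonempty c := by
          rw [← Finset.sum_mul, hw.2, one_mul]
    _ ≤ ∑ k, w k * c k := by
        apply Finset.sum_le_sum
        intro k _
        exact mul_le_mul_of_nonneg_left (Finset.inf'_le c (mem_univ k)) (hw.1 k)
  · calc ∑ k, w k * c k ≤ ∑ k, w k * univ.sup' univ_nonempty c := by
          apply Finset.sum_le_sum
          intro k _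
          exact mul_le_mul_of_nonneg_left (Finset.le_sup' c (mem_univ k)) (hw.1 k)
    _ = univ.sup' univ_nonempty c := by rw [← Finset.sum_mul, hw.2, one_mul]

theorem stmt10 {n : Type*} [Fintype n] [Nonempty n] (y z : n → ℝ)
    (T : Matrix n n ℝ) (ψ : ℝ) (hψ : 0 ≤ ψ)
    (hy : (∀ i, 0 ≤ y i) ∧ ∑ i, y i = 1)
    (hz : (∀ i, 0 ≤ z i) ∧ ∑ i, z i = 1)
    (hT : RowStochastic T) (hδ : deltaErg T ≤ ψ) :
    ∀ i : n, |(y ᵥ* T) i - (z ᵥ* T) i| ≤ ψ := by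
  intro i
  have hcol : ∀ a b : n, |T a i - T b i| ≤ ψ := by
    intro a b
    refine le_trans ?_ hδ
    refine le_trans ?_ (Finset.le_sup' _ (mem_univ i))
    exact Finset.le_sup' (fun p : n × n => |T p.1 i - T p.2 i|) (mem_univ (a, b))
  have hy' := convex_bounds y (fun k => T k i) hy
  have hz' := convex_bounds z (fun k => T k i) hz
  obtain ⟨a, -, ha⟩ := Finset.exists_mem_eq_sup' (univ_nonempty (α := n)) (fun k => T k i)
  obtain ⟨b, -, hb⟩ := Finset.exists_mem_eq_inf' (univ_nonempty (α := n)) (fun k => T k i)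
  have key : ∀ u v : n → ℝ, (∀ i, 0 ≤ u i) ∧ ∑ i, u i = 1 → (∀ i, 0 ≤ v i) ∧ ∑ i, v i = 1 →
      ∑ k, u k * T k i - ∑ k, v k * T k i ≤ ψ := by
    intro u v hu hv
    have h1 := (convex_bounds u (fun k => T k i) hu).2
    have h2 := (convex_bounds v (fun k => T k i) hv).1
    have : ∑ k, u k * T k i - ∑ k, v k * T k i ≤ T a i - T b i := by
      rw [ha] at h1; rw [hb] at h2; linarith
    exact le_trans this (le_trans (le_abs_self _) (hcol a b))
  have hyT : (y ᵥ* T) i = ∑ k, y k * T k i := by simp [vecMul, dotProduct]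
  have hzT : (z ᵥ* T) i = ∑ k, z k * T k i := by simp [vecMul, dotProduct]
  rw [hyT, hzT, abs_sub_le_iff]
  exact ⟨key y z hy hz, key z y hz hy⟩
end

section
/- Suppose y_k = y_0 T_k and z_k = z_0 T_k where T_k are row stochastic matrices, y_0, z_0 are nonnegative vectors with Y = Σ_j y_0[j] > 0 and Z = Σ_j z_0[j] > 0, δ(T_k) → 0, and for infinitely many k we have z_k[i] ≥ μ > 0 at coordinate i. Then along those k, y_k[i]/z_k[i] → Y/Z. -/
open Finset Matrix

lemma conv_bound {n : Type*} [Fintype n] [Nonempty n] (w : n → ℝ) (hw : ∀ j, 0 ≤ w j)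
    (c : n → ℝ) :
    (univ.inf' univ_nonempty c) * (∑ j, w j) ≤ ∑ j, w j * c j ∧
    ∑ j, w j * c j ≤ (univ.sup' univ_nonempty c) * (∑ j, w j) := by
  constructor
  · rw [Finset.mul_sum]
    refine Finset.sum_le_sum fun j _ => ?_
    rw [mul_comm]
    exact mul_le_mul_of_nonneg_left (inf'_le _ (mem_univ j)) (hw j)
  · rw [Finset.mul_sum]
    refine Finset.sum_le_sum fun j _ => ?_
    rw [mul_comm _ (w j)]
    exact mul_le_mul_of_nonneg_left (le_sup' _ (mem_univ j)) (hw j)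

lemma key_bound {n : Type*} [Fintype n] [Nonempty n] (A : Matrix n n ℝ) (i : n)
    (w1 w2 : n → ℝ) (hw1 : ∀ j, 0 ≤ w1 j) (hw2 : ∀ j, 0 ≤ w2 j)
    (hW1 : 0 < ∑ j, w1 j) (hW2 : 0 < ∑ j, w2 j) :
    |(∑ j, w1 j * A j i) / (∑ j, w1 j) - (∑ j, w2 j * A j i) / (∑ j, w2 j)| ≤ deltaErg A := by
  set c : n → ℝ := fun j => A j i with hc
  set I := univ.inf' univ_nonempty c with hI
  set S := univ.sup' univ_nonempty c with hS
  have h1 := conv_bound w1 hw1 c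
  have h2 := conv_bound w2 hw2 c
  have b1l : I ≤ (∑ j, w1 j * c j) / (∑ j, w1 j) :=
    (le_div_iff₀ hW1).mpr h1.1
  have b1u : (∑ j, w1 j * c j) / (∑ j, w1 j) ≤ S :=
    (div_le_iff₀ hW1).mpr h1.2
  have b2l : I ≤ (∑ j, w2 j * c j) / (∑ j, w2 j) :=
    (le_div_iff₀ hW2).mpr h2.1
  have b2u : (∑ j, w2 j * c j) / (∑ j, w2 j) ≤ S :=
    (div_le_iff₀ hW2).mpr h2.2
  have hSI : S - I ≤ deltaErg A := by
    obtain ⟨j1, _, hj1⟩ := exists_mem_eq_sup' (univ_nonempty (α := n)) c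
    obtain ⟨j2, _, hj2⟩ := exists_mem_eq_inf' (univ_nonempty (α := n)) c
    have : S - I ≤ |A j1 i - A j2 i| := by
      rw [hS, hI, hj1, hj2]; exact le_abs_self _
    refine this.trans ?_
    have h3 : |A j1 i - A j2 i| ≤
        univ.sup' univ_nonempty fun p : n × n => |A p.1 i - A p.2 i| :=
      le_sup' (f := fun p : n × n => |A p.1 i - A p.2 i|) (mem_univ (j1, j2))
    exact h3.trans (le_sup' (f := fun j => univ.sup' univ_nonempty
      fun p : n × n => |A p.1 j - A p.2 j|) (mem_univ i))
  rw [abs_sub_le_iff]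
  constructor
  · linarith
  · linarith

lemma deltaErg_nonneg {n : Type*} [Fintype n] [Nonempty n] (A : Matrix n n ℝ) :
    0 ≤ deltaErg A := by
  obtain ⟨j⟩ := ‹Nonempty n›
  have h : (0 : ℝ) = |A j j - A j j| := by simp
  rw [h]
  exact le_trans (le_sup' (f := fun p : n × n => |A p.1 j - A p.2 j|) (mem_univ (j, j)))
    (le_sup' (f := fun j => univ.sup' univ_nonempty
      fun p : n × n => |A p.1 j - A p.2 j|) (mem_univ j))

theorem stmt19 {n : Type*} [Fintype n] [Nonempty n] (T : ℕ → Matrix n n ℝ)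
    (hT : ∀ k, RowStochastic (T k)) (y0 z0 : n → ℝ)
    (hy0 : ∀ j, 0 ≤ y0 j) (hz0 : ∀ j, 0 ≤ z0 j)
    (hY : 0 < ∑ j, y0 j) (hZ : 0 < ∑ j, z0 j)
    (hδ : Filter.Tendsto (fun k => deltaErg (T k)) Filter.atTop (nhds 0))
    (i : n) (μ : ℝ) (hμ : 0 < μ) (φ : ℕ → ℕ) (hφ : StrictMono φ)
    (hinf : ∀ m, μ ≤ (z0 ᵥ* T (φ m)) i) :
    Filter.Tendsto (fun m => (y0 ᵥ* T (φ m)) i / (z0 ᵥ* T (φ m)) i)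
      Filter.atTop (nhds ((∑ j, y0 j) / (∑ j, z0 j))) := by
  set Y := ∑ j, y0 j with hYdef
  set Z := ∑ j, z0 j with hZdef
  rw [tendsto_iff_dist_tendsto_zero]
  have hbound : ∀ m, dist ((y0 ᵥ* T (φ m)) i / (z0 ᵥ* T (φ m)) i) (Y / Z)
      ≤ (Y / μ) * deltaErg (T (φ m)) := by
    intro m
    set A := T (φ m) with hA
    have hy : (y0 ᵥ* A) i = ∑ j, y0 j * A j i := by
      simp [Matrix.vecMul, dotProduct]
    have hz : (z0 ᵥ* A) i = ∑ j, z0 j * A j i := by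
      simp [Matrix.vecMul, dotProduct]
    set y := (y0 ᵥ* A) i with hyd
    set z := (z0 ᵥ* A) i with hzd
    have hzμ : μ ≤ z := hinf m
    have hzpos : 0 < z := lt_of_lt_of_le hμ hzμ
    have hkey : |y / Y - z / Z| ≤ deltaErg A := by
      rw [hy, hz]
      exact key_bound A i y0 z0 hy0 hz0 hY hZ
    have hid : y / z - Y / Z = (Y / z) * (y / Y - z / Z) := by
      field_simp
    rw [Real.dist_eq, hid, abs_mul]
    have h1 : |Y / z| = Y / z := abs_of_nonneg (div_nonneg hY.le hzpos.le)
    rw [h1]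
    have h2 : Y / z ≤ Y / μ := div_le_div_of_nonneg_left hY.le hμ hzμ
    exact mul_le_mul h2 hkey (abs_nonneg _) (div_nonneg hY.le hμ.le)
  have htend : Filter.Tendsto (fun m => (Y / μ) * deltaErg (T (φ m)))
      Filter.atTop (nhds 0) := by
    have := (hδ.comp hφ.tendsto_atTop).const_mul (Y / μ)
    simpa using this
  exact squeeze_zero (fun m => dist_nonneg) hbound htend
end
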